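/- arXiv:1906.03091 — 4 statements merged into one kernel-verified Lean document; each statement's English description precedes it below -/
import Mathlib

section
/- The language L(⊡) is less expressive than the language L(⊞) on the class of all bimodal models, on the class of serial bimodal models, on the class of transitive bimodal models, and on the class of Euclidean bimodal models. Concretely: (i) for every φ ∈ L(⊡) there is ψ ∈ L(⊞) equivalent to φ on all bimodal models (namely ⊞φ ∧ ⊞¬φ for ⊡φ); and (ii) there exist two pointed bimodal models (M,s) and (M',s'), both serial, transitive and Euclidean, such that M,s ⊨ ⊞p and M',s' ⊭ ⊞p, while for every φ ∈ L(⊡), M,s ⊨ φ iff M',s' ⊨ φ. -/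
/-- Formulas built from propositional variables by ¬, ∧, ⊡ (`gbox`) and ⊞ (`pbox`). -/
inductive Form : Type
  | var : ℕ → Form
  | neg : Form → Form
  | conj : Form → Form → Form
  | gbox : Form → Form
  | pbox : Form → Form

/-- A bimodal model: a nonempty set of worlds, two accessibility relations and a valuation. -/
structure BiModel : Type 1 where
  S : Type
  ne : Nonempty S
  R1 : S → S → Prop
  R2 : S → S → Prop
  V : ℕ → Set S

/-- Truth of a formula at a world. ⊡φ: all R1-successors and R2-successors agree
on φ. ⊞φ: either φ holds at all R1-successors, or ¬φ holds at all R2-successors. -/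
def sat (M : BiModel) : M.S → Form → Prop
  | s, .var n => s ∈ M.V n
  | s, .neg φ => ¬ sat M s φ
  | s, .conj φ ψ => sat M s φ ∧ sat M s ψ
  | s, .gbox φ => ∀ t u, M.R1 s t → M.R2 s u → (sat M t φ ↔ sat M u φ)
  | s, .pbox φ => (∀ t, M.R1 s t → sat M t φ) ∨ (∀ u, M.R2 s u → ¬ sat M u φ)

/-- φ belongs to the fragment L(⊡) (no occurrence of ⊞). -/
def Form.noPBox : Form → Prop
  | .var _ => True
  | .neg φ => φ.noPBox
  | .conj φ ψ => φ.noPBox ∧ ψ.noPBox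
  | .gbox φ => φ.noPBox
  | .pbox _ => False

/-- φ belongs to the fragment L(⊞) (no occurrence of ⊡). -/
def Form.noGBox : Form → Prop
  | .var _ => True
  | .neg φ => φ.noGBox
  | .conj φ ψ => φ.noGBox ∧ ψ.noGBox
  | .gbox _ => False
  | .pbox φ => φ.noGBox

/-- A model is serial if both relations are serial. -/
def SerialM (M : BiModel) : Prop := (∀ s, ∃ t, M.R1 s t) ∧ (∀ s, ∃ t, M.R2 s t)
/-- A model is transitive if both relations are transitive. -/
def TransM (M : BiModel) : Prop := Transitive M.R1 ∧ Transitive M.R2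
/-- A model is Euclidean if both relations are Euclidean. -/
def EuclM (M : BiModel) : Prop :=
  (∀ x y z : M.S, M.R1 x y → M.R1 x z → M.R1 y z) ∧
  (∀ x y z : M.S, M.R2 x y → M.R2 x z → M.R2 y z)
/-- A model is symmetric if both relations are symmetric. -/
def SymmM (M : BiModel) : Prop := Symmetric M.R1 ∧ Symmetric M.R2
/-- A model is reflexive if both relations are reflexive. -/
def ReflM (M : BiModel) : Prop := Reflexive M.R1 ∧ Reflexive M.R2

/-!
`⊡φ` says that the `R1`- and `R2`-successors agree on `φ`, which is exactly `⊞φ ∧ ⊞¬φ`;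
translating every `⊡` in this way embeds `L(⊡)` into `L(⊞)`. Conversely, `⊡` treats the two
relations symmetrically, so swapping `R1` and `R2` preserves the truth of every `L(⊡)`-formula,
while it can change the truth of `⊞p`: in a model where `R1` always leads to a `p`-world and
`R2` always to a `¬p`-world, `⊞p` holds, and after swapping it fails.
-/

def BiModel.swap (M : BiModel) : BiModel :=
  ⟨M.S, M.ne, M.R2, M.R1, M.V⟩

def constModel {α : Type} [Nonempty α] (a b : α) (V : ℕ → Set α) : BiModel :=
  ⟨α, ‹_›, fun _ y => y = a, fun _ y => y = b, V⟩

def Form.toPBox : Form → Form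
  | .var n => .var n
  | .neg φ => .neg φ.toPBox
  | .conj φ ψ => .conj φ.toPBox ψ.toPBox
  | .gbox φ => .conj (.pbox φ.toPBox) (.pbox (.neg φ.toPBox))
  | .pbox φ => .pbox φ.toPBox

theorem Form.noGBox_toPBox (φ : Form) : φ.toPBox.noGBox := by
  induction φ <;> simp_all [Form.toPBox, Form.noGBox]

theorem sat_gbox_iff (M : BiModel) (s : M.S) (φ : Form) :
    sat M s φ.gbox ↔ sat M s φ.pbox ∧ sat M s φ.neg.pbox := by
  simp only [sat]
  grind

theorem sat_toPBox_iff (M : BiModel) (s : M.S) (φ : Form) : sat M s φ.toPBox ↔ sat M s φ := by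
  induction φ generalizing s with
  | var n => rfl
  | neg φ ih => simp only [Form.toPBox, sat, ih]
  | conj φ ψ ihφ ihψ => simp only [Form.toPBox, sat, ihφ, ihψ]
  | gbox φ ih =>
    rw [sat_gbox_iff]
    simp only [Form.toPBox, sat, ih]
  | pbox φ ih => simp only [Form.toPBox, sat, ih]

theorem sat_swap_iff {φ : Form} (hφ : φ.noPBox) (M : BiModel) (s : M.S) :
    sat M.swap s φ ↔ sat M s φ := by
  induction φ generalizing s with
  | var n => rfl
  | neg φ ih => exact not_congr (ih hφ s)
  | conj φ ψ ihφ ihψ => exact and_congr (ihφ hφ.1 s) (ihψ hφ.2 s)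
  | gbox φ ih =>
    simp only [sat, BiModel.swap] at ih ⊢
    simp only [ih hφ]
    exact ⟨fun h t u ht hu => (h u t hu ht).symm, fun h t u ht hu => (h u t hu ht).symm⟩
  | pbox φ => exact hφ.elim

section constModel

variable {α : Type} [Nonempty α] (a b : α) (V : ℕ → Set α)

theorem serialM_constModel : SerialM (constModel a b V) :=
  ⟨fun _ => ⟨a, rfl⟩, fun _ => ⟨b, rfl⟩⟩

theorem transM_constModel : TransM (constModel a b V) :=
  ⟨fun _ _ _ _ h => h, fun _ _ _ _ h => h⟩

theorem euclM_constModel : EuclM (constModel a b V) :=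
  ⟨fun _ _ _ _ h => h, fun _ _ _ _ h => h⟩

end constModel

/-- L(⊡) is less expressive than L(⊞) on the classes of all/serial/transitive/
Euclidean bimodal models: (i) every L(⊡)-formula has an L(⊞)-equivalent on all
models; (ii) there are two pointed models, both serial, transitive and Euclidean,
distinguished by the L(⊞)-formula ⊞p but not by any L(⊡)-formula. -/
theorem stmt3 :
  (∀ φ : Form, φ.noPBox →
      ∃ ψ : Form, ψ.noGBox ∧ ∀ (M : BiModel) (s : M.S), (sat M s φ ↔ sat M s ψ)) ∧
    (∃ (M M' : BiModel) (s : M.S) (s' : M'.S),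
      SerialM M ∧ TransM M ∧ EuclM M ∧
      SerialM M' ∧ TransM M' ∧ EuclM M' ∧
      sat M s (Form.pbox (Form.var 0)) ∧ ¬ sat M' s' (Form.pbox (Form.var 0)) ∧
      ∀ φ : Form, φ.noPBox → (sat M s φ ↔ sat M' s' φ)) := by
  refine ⟨fun φ _ => ⟨φ.toPBox, φ.noGBox_toPBox, fun M s => (sat_toPBox_iff M s φ).symm⟩, ?_⟩
  let V : ℕ → Set Bool := fun _ => {true}
  refine ⟨constModel true false V, constModel false true V, true, true,
    serialM_constModel .., transM_constModel .., euclM_constModel ..,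
    serialM_constModel .., transM_constModel .., euclM_constModel ..,
    Or.inl fun _ ht => ht, ?_, fun φ hφ => ?_⟩
  · rintro (h | h)
    · exact Bool.false_ne_true (h false rfl)
    · exact h true rfl rfl
  · exact (sat_swap_iff hφ (constModel true false V) true).symm
end

section
/- The language L(⊡) is less expressive than the language L(⊞) on the class of symmetric bimodal models. Concretely: (i) for every φ ∈ L(⊡) there is ψ ∈ L(⊞) equivalent to φ on all bimodal models (namely ⊞φ ∧ ⊞¬φ for ⊡φ); and (ii) there exist two pointed symmetric bimodal models (M,s) and (M',s') such that M,s ⊨ ⊞p and M',s' ⊭ ⊞p, while for every φ ∈ L(⊡), M,s ⊨ φ iff M',s' ⊨ φ. -/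
/-! ⊡φ says that the R1- and R2-successors agree on φ, which is ⊞φ ∧ ⊞¬φ; replacing every ⊡
this way translates L(⊡) into L(⊞). Conversely, ⊡ treats R1 and R2 symmetrically, so no
L(⊡)-formula distinguishes a pointed model from one obtained by exchanging the two relations.
⊞ does: in the fork 1 —R1— 0 —R2— 2, ⊞p holds at 0 when p holds only at 1 and fails at 0 when
p holds only at 2, and swapping the leaves maps the first model onto the second with R1 and R2
exchanged. -/

def Form.elimGBox : Form → Form
  | .var n => .var n
  | .neg φ => .neg φ.elimGBox
  | .conj φ ψ => .conj φ.elimGBox ψ.elimGBox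
  | .gbox φ => .conj (.pbox φ.elimGBox) (.pbox (.neg φ.elimGBox))
  | .pbox φ => .pbox φ.elimGBox

theorem Form.noGBox_elimGBox (φ : Form) : φ.elimGBox.noGBox := by
  induction φ with
  | var => trivial
  | neg _ ih | pbox _ ih => exact ih
  | conj _ _ ih₁ ih₂ => exact ⟨ih₁, ih₂⟩
  | gbox _ ih => exact ⟨ih, ih⟩

theorem sat_gbox_iff_pbox_and_pbox_neg (M : BiModel) (s : M.S) (φ : Form) :
    sat M s (.gbox φ) ↔ sat M s (.pbox φ) ∧ sat M s (.pbox (.neg φ)) := by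
  simp only [sat, not_not]
  grind

theorem sat_elimGBox (M : BiModel) (φ : Form) (s : M.S) :
    sat M s φ.elimGBox ↔ sat M s φ := by
  induction φ generalizing s with
  | var => rfl
  | neg _ ih => exact not_congr (ih s)
  | conj _ _ ih₁ ih₂ => exact and_congr (ih₁ s) (ih₂ s)
  | gbox _ ih =>
    rw [sat_gbox_iff_pbox_and_pbox_neg]
    simp only [Form.elimGBox, sat, ih]
  | pbox _ ih => simp only [Form.elimGBox, sat, ih]

theorem sat_iff_of_swap {M M' : BiModel} (e : M.S ≃ M'.S)
    (h₁ : ∀ s t, M'.R1 (e s) (e t) ↔ M.R2 s t) (h₂ : ∀ s t, M'.R2 (e s) (e t) ↔ M.R1 s t)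
    (hV : ∀ n s, e s ∈ M'.V n ↔ s ∈ M.V n) {φ : Form} (hφ : φ.noPBox) (s : M.S) :
    sat M' (e s) φ ↔ sat M s φ := by
  induction φ generalizing s with
  | var n => exact hV n s
  | neg _ ih => exact not_congr (ih hφ s)
  | conj _ _ ih₁ ih₂ => exact and_congr (ih₁ hφ.1 s) (ih₂ hφ.2 s)
  | gbox _ ih =>
    simp only [sat, e.surjective.forall, h₁, h₂, ih hφ]
    exact ⟨fun h t u ht hu => (h u t hu ht).symm, fun h t u ht hu => (h u t hu ht).symm⟩
  | pbox => exact hφ.elim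

def fork (w : Fin 3) : BiModel where
  S := Fin 3
  ne := ⟨0⟩
  R1 x y := s(x, y) = s(0, 1)
  R2 x y := s(x, y) = s(0, 2)
  V n := {x | n = 0 ∧ x = w}

theorem symmM_fork (w : Fin 3) : SymmM (fork w) :=
  ⟨fun _ _ h => Sym2.eq_swap.trans h, fun _ _ h => Sym2.eq_swap.trans h⟩

theorem sat_fork_one_pbox : sat (fork 1) (0 : Fin 3) (.pbox (.var 0)) :=
  Or.inl fun _ ht => ⟨rfl, Sym2.congr_right.mp ht⟩

theorem not_sat_fork_two_pbox : ¬ sat (fork 2) (0 : Fin 3) (.pbox (.var 0)) := by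
  rintro (h | h)
  · exact absurd (h (1 : Fin 3) rfl).2 (by decide)
  · exact h (2 : Fin 3) rfl ⟨rfl, rfl⟩

theorem sat_fork_one_iff_sat_fork_two {φ : Form} (hφ : φ.noPBox) :
    sat (fork 1) (0 : Fin 3) φ ↔ sat (fork 2) (0 : Fin 3) φ :=
  (sat_iff_of_swap (M := fork 1) (M' := fork 2) (Equiv.swap 1 2 : Fin 3 ≃ Fin 3)
    (by unfold fork; decide) (by unfold fork; decide)
    (fun _ _ => and_congr_right fun _ => Equiv.swap_apply_eq_iff) hφ (0 : Fin 3)).symm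

/-- L(⊡) is less expressive than L(⊞) on the class of symmetric bimodal models:
(i) every L(⊡)-formula has an L(⊞)-equivalent on all models; (ii) there are two
pointed symmetric models distinguished by ⊞p but not by any L(⊡)-formula. -/
theorem stmt4 :
  (∀ φ : Form, φ.noPBox →
      ∃ ψ : Form, ψ.noGBox ∧ ∀ (M : BiModel) (s : M.S), (sat M s φ ↔ sat M s ψ)) ∧
    (∃ (M M' : BiModel) (s : M.S) (s' : M'.S),
      SymmM M ∧ SymmM M' ∧
      sat M s (Form.pbox (Form.var 0)) ∧ ¬ sat M' s' (Form.pbox (Form.var 0)) ∧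
      ∀ φ : Form, φ.noPBox → (sat M s φ ↔ sat M' s' φ)) :=
  ⟨fun φ _ => ⟨φ.elimGBox, φ.noGBox_elimGBox, fun M s => (sat_elimGBox M φ s).symm⟩,
    ⟨fork 1, fork 2, (0 : Fin 3), (0 : Fin 3), symmM_fork 1, symmM_fork 2,
      sat_fork_one_pbox, not_sat_fork_two_pbox, fun _ => sat_fork_one_iff_sat_fork_two⟩⟩
end

section
/- Let M = ⟨S, R1, R2, V⟩ and M' = ⟨S', R1', R2', V'⟩ be bimodal models and let f be a ⊡-morphism from M to M'. Then for every x ∈ S and every formula φ built from propositional variables by ¬, ∧, ⊡ and ⊞: M,x ⊨ φ if and only if M',f(x) ⊨ φ. -/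
/-- f is a ⊡-morphism from M to M': (Var), (Forth) and (Back). -/
def IsMorphism (M M' : BiModel) (f : M.S → M'.S) : Prop :=
  (∀ (p : ℕ) (x : M.S), x ∈ M.V p ↔ f x ∈ M'.V p) ∧
  (∀ x y z : M.S, M.R1 x y → M.R2 x z → f y ≠ f z →
    M'.R1 (f x) (f y) ∧ M'.R2 (f x) (f z)) ∧
  (∀ (x : M.S) (y' z' : M'.S), M'.R1 (f x) y' → M'.R2 (f x) z' → y' ≠ z' →
    ∃ y z : M.S, M.R1 x y ∧ M.R2 x z ∧ f y = y' ∧ f z = z')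

/-- Formulas (in the full language with ⊡ and ⊞) are invariant under ⊡-morphisms. -/
theorem stmt6 (M M' : BiModel) (f : M.S → M'.S) (hf : IsMorphism M M' f) :
    ∀ (x : M.S) (φ : Form), sat M x φ ↔ sat M' (f x) φ := by
  obtain ⟨hV, hForth, hBack⟩ := hf
  intro x φ
  induction φ generalizing x with
  | var n => exact hV n x
  | neg φ ih => simp only [sat, ih x]
  | conj φ ψ ih1 ih2 => simp only [sat, ih1 x, ih2 x]
  | gbox φ ih =>
    simp only [sat]
    constructor
    · intro h t' u' ht' hu'
      by_cases he : t' = u'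
      · subst he; exact Iff.rfl
      · obtain ⟨t, u, ht, hu, rfl, rfl⟩ := hBack x t' u' ht' hu' he
        rw [← ih t, ← ih u]; exact h t u ht hu
    · intro h t u ht hu
      by_cases he : f t = f u
      · rw [ih t, ih u, he]
      · obtain ⟨h1, h2⟩ := hForth x t u ht hu he
        rw [ih t, ih u]; exact h (f t) (f u) h1 h2
  | pbox φ ih =>
    simp only [sat]
    constructor
    · rintro (hL | hR)
      · by_cases hl' : ∀ t', M'.R1 (f x) t' → sat M' t' φ
        · exact Or.inl hl'
        · push_neg at hl'
          obtain ⟨t', ht', hns⟩ := hl'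
          right
          intro u' hu' hs
          have hne : t' ≠ u' := fun h => hns (h ▸ hs)
          obtain ⟨t, u, ht, hu, rfl, rfl⟩ := hBack x t' u' ht' hu' hne
          exact hns ((ih t).mp (hL t ht))
      · by_cases hr' : ∀ u', M'.R2 (f x) u' → ¬ sat M' u' φ
        · exact Or.inr hr'
        · push_neg at hr'
          obtain ⟨u', hu', hs⟩ := hr'
          left
          intro t' ht'
          by_contra hns
          have hne : t' ≠ u' := fun h => hns (h ▸ hs)
          obtain ⟨t, u, ht, hu, rfl, rfl⟩ := hBack x t' u' ht' hu' hne
          exact hR u hu ((ih u).mpr hs)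
    · rintro (hL | hR)
      · by_cases hl : ∀ t, M.R1 x t → sat M t φ
        · exact Or.inl hl
        · push_neg at hl
          obtain ⟨t, ht, hns⟩ := hl
          right
          intro u hu hs
          have hne : f t ≠ f u := fun h => hns ((ih t).mpr (h ▸ (ih u).mp hs))
          obtain ⟨h1, _⟩ := hForth x t u ht hu hne
          exact hns ((ih t).mpr (hL (f t) h1))
      · by_cases hr : ∀ u, M.R2 x u → ¬ sat M u φ
        · exact Or.inr hr
        · push_neg at hr
          obtain ⟨u, hu, hs⟩ := hr
          left
          intro t ht
          by_contra hns
          have hne : f t ≠ f u := fun h => hns ((ih t).mpr (h ▸ (ih u).mp hs))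
          obtain ⟨_, h2⟩ := hForth x t u ht hu hne
          exact hR (f u) h2 ((ih u).mp hs)
end

section
/- None of the frame properties seriality, reflexivity, transitivity, symmetry, and Euclidicity (of both R1 and R2) is definable in the language of formulas built from propositional variables by ¬, ∧, ⊡ and ⊞: for each of these properties P there is no set Γ of such formulas with the feature that a bimodal frame F satisfies P if and only if F ⊨ γ for all γ ∈ Γ. -/
/-- A bimodal frame: a nonempty set of worlds with two accessibility relations. -/
structure BiFrame : Type 1 where
  S : Type
  ne : Nonempty S
  R1 : S → S → Prop
  R2 : S → S → Prop

/-- The model obtained by equipping a frame with a valuation. -/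
def BiFrame.toModel (F : BiFrame) (V : ℕ → Set F.S) : BiModel :=
  ⟨F.S, F.ne, F.R1, F.R2, V⟩

/-- φ is valid on the frame F: true at every world under every valuation. -/
def frameValid (F : BiFrame) (φ : Form) : Prop :=
  ∀ (V : ℕ → Set F.S) (s : F.S), sat (F.toModel V) s φ

/-- Frame properties (of both relations). -/
def SerialF (F : BiFrame) : Prop := (∀ s, ∃ t, F.R1 s t) ∧ (∀ s, ∃ t, F.R2 s t)
def ReflF (F : BiFrame) : Prop := Reflexive F.R1 ∧ Reflexive F.R2
def TransF (F : BiFrame) : Prop := Transitive F.R1 ∧ Transitive F.R2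
def SymmF (F : BiFrame) : Prop := Symmetric F.R1 ∧ Symmetric F.R2
def EuclF (F : BiFrame) : Prop :=
  (∀ x y z : F.S, F.R1 x y → F.R1 x z → F.R1 y z) ∧
  (∀ x y z : F.S, F.R2 x y → F.R2 x z → F.R2 y z)

/-- P is definable by a set of formulas: a frame has P iff it validates all of Γ. -/
def Definable (P : BiFrame → Prop) : Prop :=
  ∃ Γ : Set Form, ∀ F : BiFrame, (P F ↔ ∀ γ ∈ Γ, frameValid F γ)

/-!
If every `R1`-successor of a world equals every `R2`-successor of it, then `⊡φ` and `⊞φ` hold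
at every world, whatever `φ` is: for `⊡` the two successors compared are the same world, and for
`⊞` a single `R1`-successor refuting `φ` is then the only `R2`-successor. On such frames every
formula is therefore equivalent to its propositional skeleton with all boxed subformulas read as
true, so all of them validate the same formulas. The one-point reflexive frame and the successor
frame on `ℕ` with empty `R2` are of this kind; the first has all five properties, the second none.
-/

namespace Form

def evalBoxesTrue (v : ℕ → Prop) : Form → Prop
  | .var n => v n
  | .neg φ => ¬ φ.evalBoxesTrue v
  | .conj φ ψ => φ.evalBoxesTrue v ∧ ψ.evalBoxesTrue v
  | .gbox _ => True
  | .pbox _ => True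

end Form

def BiModel.SuccessorsCoincide (M : BiModel) : Prop :=
  ∀ s t u, M.R1 s t → M.R2 s u → t = u

def BiFrame.SuccessorsCoincide (F : BiFrame) : Prop :=
  ∀ s t u, F.R1 s t → F.R2 s u → t = u

theorem sat_gbox_of_successorsCoincide {M : BiModel} (hM : M.SuccessorsCoincide) (s : M.S)
    (φ : Form) : sat M s (.gbox φ) := by
  intro t u ht hu
  rw [hM s t u ht hu]

theorem sat_pbox_of_successorsCoincide {M : BiModel} (hM : M.SuccessorsCoincide) (s : M.S)
    (φ : Form) : sat M s (.pbox φ) := by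
  by_cases h : ∀ t, M.R1 s t → sat M t φ
  · exact .inl h
  · push Not at h
    obtain ⟨t, ht, hφ⟩ := h
    exact .inr fun u hu => hM s t u ht hu ▸ hφ

theorem sat_iff_evalBoxesTrue {M : BiModel} (hM : M.SuccessorsCoincide) (s : M.S) (φ : Form) :
    sat M s φ ↔ φ.evalBoxesTrue (fun n => s ∈ M.V n) := by
  induction φ with
  | var n => rfl
  | neg φ ih => exact not_congr ih
  | conj φ ψ ihφ ihψ => exact and_congr ihφ ihψ
  | gbox φ => exact iff_true_intro (sat_gbox_of_successorsCoincide hM s φ)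
  | pbox φ => exact iff_true_intro (sat_pbox_of_successorsCoincide hM s φ)

theorem frameValid_iff_evalBoxesTrue {F : BiFrame} (hF : F.SuccessorsCoincide) (φ : Form) :
    frameValid F φ ↔ ∀ v, φ.evalBoxesTrue v := by
  refine ⟨fun h v => ?_, fun h V s => ?_⟩
  · exact (sat_iff_evalBoxesTrue (M := F.toModel _) hF F.ne.some φ).mp
      (h (fun n => {_s | v n}) F.ne.some)
  · exact (sat_iff_evalBoxesTrue (M := F.toModel _) hF s φ).mpr (h _)

theorem not_definable_of_successorsCoincide {P : BiFrame → Prop} {F G : BiFrame}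
    (hF : F.SuccessorsCoincide) (hG : G.SuccessorsCoincide) (hPF : P F) (hPG : ¬ P G) :
    ¬ Definable P := by
  rintro ⟨Γ, hΓ⟩
  refine hPG ((hΓ G).mpr fun γ hγ => ?_)
  rw [frameValid_iff_evalBoxesTrue hG, ← frameValid_iff_evalBoxesTrue hF]
  exact (hΓ F).mp hPF γ hγ

def pointFrame : BiFrame := ⟨Unit, ⟨()⟩, fun _ _ => True, fun _ _ => True⟩

def succFrame : BiFrame := ⟨ℕ, ⟨0⟩, fun x y => y = x + 1, fun _ _ => False⟩

theorem pointFrame_successorsCoincide : pointFrame.SuccessorsCoincide :=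
  fun _ _ _ _ _ => rfl

theorem succFrame_successorsCoincide : succFrame.SuccessorsCoincide :=
  fun _ _ _ _ hu => hu.elim

theorem not_definable_of_pointFrame_of_not_succFrame {P : BiFrame → Prop} (hpoint : P pointFrame)
    (hsucc : ¬ P succFrame) : ¬ Definable P :=
  not_definable_of_successorsCoincide pointFrame_successorsCoincide succFrame_successorsCoincide
    hpoint hsucc

/-- None of seriality, reflexivity, transitivity, symmetry and Euclidicity is
definable in the language built from variables by ¬, ∧, ⊡ and ⊞. -/
theorem stmt8 :
    ¬ Definable SerialF ∧ ¬ Definable ReflF ∧ ¬ Definable TransF ∧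
    ¬ Definable SymmF ∧ ¬ Definable EuclF := by
  refine ⟨not_definable_of_pointFrame_of_not_succFrame ?_ ?_,
    not_definable_of_pointFrame_of_not_succFrame ?_ ?_,
    not_definable_of_pointFrame_of_not_succFrame ?_ ?_,
    not_definable_of_pointFrame_of_not_succFrame ?_ ?_,
    not_definable_of_pointFrame_of_not_succFrame ?_ ?_⟩
  · exact ⟨fun _ => ⟨(), trivial⟩, fun _ => ⟨(), trivial⟩⟩
  · exact fun ⟨_, h⟩ => (h (0 : ℕ)).elim fun _ h => h
  · exact ⟨fun _ => trivial, fun _ => trivial⟩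
  · exact fun ⟨_, h⟩ => h (0 : ℕ)
  · exact ⟨fun _ _ _ _ _ => trivial, fun _ _ _ _ _ => trivial⟩
  · exact fun ⟨h, _⟩ =>
      absurd (@h (0 : ℕ) (1 : ℕ) (2 : ℕ) rfl rfl) (by decide : (2 : ℕ) ≠ 0 + 1)
  · exact ⟨fun _ _ _ => trivial, fun _ _ _ => trivial⟩
  · exact fun ⟨h, _⟩ => absurd (@h (0 : ℕ) (1 : ℕ) rfl) (by decide : (0 : ℕ) ≠ 1 + 1)
  · exact ⟨fun _ _ _ _ _ => trivial, fun _ _ _ _ _ => trivial⟩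
  · exact fun ⟨h, _⟩ =>
      absurd (h (0 : ℕ) (1 : ℕ) (1 : ℕ) rfl rfl) (by decide : (1 : ℕ) ≠ 1 + 1)
end
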